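/- Let (X,d) be a metric space whose underlying set X is finite and nonempty. If the basic geodesic graph of (X,d) is a tree (connected and acyclic), then (X,d) satisfies the fourth-point condition. -/

import Mathlib

/-- A chain of intermediate points witnessing that the pair `{x, x'}` is non-basic:
`k ≥ 1` pairwise distinct intermediate points, each different from `x` and `x'`,
along which the distances sum to `dist x x'`. -/
def IsNonBasicChain {X : Type*} [MetricSpace X] (x x' : X) : Prop :=
  ∃ (k : ℕ) (p : Fin (k + 2) → X), 1 ≤ k ∧ Function.Injective p ∧
    p 0 = x ∧ p (Fin.last (k + 1)) = x' ∧
    dist x x' = ∑ i : Fin (k + 1), dist (p i.castSucc) (p i.succ)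

/-- The unordered pair `{x, x'}` is a non-basic edge. -/
def IsNonBasicEdge {X : Type*} [MetricSpace X] (x x' : X) : Prop :=
  IsNonBasicChain x x' ∨ IsNonBasicChain x' x

/-- The unordered pair `{x, x'}` is a basic edge. -/
def IsBasicEdge {X : Type*} [MetricSpace X] (x x' : X) : Prop :=
  x ≠ x' ∧ ¬ IsNonBasicEdge x x'

/-- The basic geodesic graph: the simple graph on `X` whose edges are the basic edges. -/
def basicGeodesicGraph (X : Type*) [MetricSpace X] : SimpleGraph X where
  Adj x y := IsBasicEdge x y
  symm := ⟨fun x y ⟨h1, h2⟩ => ⟨h1.symm, fun h => h2 h.symm⟩⟩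
  loopless := ⟨fun x ⟨h1, _⟩ => h1 rfl⟩

/-- The fourth-point condition. -/
def FourthPointCondition (X : Type*) [MetricSpace X] : Prop :=
  ∀ x y z : X, ∃ p : X,
    dist x p + dist y p + dist z p = (dist x y + dist y z + dist z x) / 2

/-! Weight a walk in a graph on `X` by the sum of the distances along its edges. A non-basic pair
has a point strictly between its endpoints, so by well-founded induction on `dist x y` every pair
is joined by a walk in the basic geodesic graph of weight `dist x y`. In a tree the bypass of that
walk is the unique path, so every path has weight equal to the distance between its endpoints.
Given `x, y, z`, the point `m` of the path from `y` to `z` closest to `x` is then a median: the path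
from `x` to `m` meets the path from `y` to `z` only in `m`, and gluing gives paths from `x` to `y`
and to `z` through `m`. -/

theorem SimpleGraph.Walk.IsPath.append {V : Type*} {G : SimpleGraph V} {x m z : V}
    {p : G.Walk x m} {q : G.Walk m z} (hp : p.IsPath) (hq : q.IsPath)
    (h : ∀ w ∈ p.support, w ∈ q.support → w = m) : (p.append q).IsPath := by
  refine .mk' ?_
  rw [support_append, List.nodup_append]
  have hq' := hq.support_nodup
  rw [← q.cons_tail_support, List.nodup_cons] at hq'
  refine ⟨hp.support_nodup, hq'.2, fun a ha b hb hab => ?_⟩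
  subst hab
  have := h a ha (q.cons_tail_support ▸ List.mem_cons_of_mem _ hb)
  exact hq'.1 (this ▸ hb)

section MetricLength

variable {X : Type*} [PseudoMetricSpace X] {G : SimpleGraph X}

noncomputable def metricLength {x y : X} (p : G.Walk x y) : ℝ :=
  (p.darts.map fun d => dist d.fst d.snd).sum

@[simp]
theorem metricLength_nil {x : X} : metricLength (SimpleGraph.Walk.nil : G.Walk x x) = 0 := rfl

@[simp]
theorem metricLength_cons {x y z : X} (h : G.Adj x y) (p : G.Walk y z) :
    metricLength (SimpleGraph.Walk.cons h p) = dist x y + metricLength p := by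
  simp [metricLength]

theorem metricLength_append {x y z : X} (p : G.Walk x y) (q : G.Walk y z) :
    metricLength (p.append q) = metricLength p + metricLength q := by
  simp [metricLength, SimpleGraph.Walk.darts_append]

theorem dist_le_metricLength {x y : X} (p : G.Walk x y) : dist x y ≤ metricLength p := by
  induction p with
  | nil => simp
  | @cons x y z h p ih =>
    rw [metricLength_cons]
    exact (dist_triangle x y z).trans (by linarith)

theorem metricLength_bypass_le [DecidableEq X] {x y : X} (p : G.Walk x y) :
    metricLength p.bypass ≤ metricLength p :=
  (p.darts_bypass_sublist_darts.map _).sum_le_sum fun _ h => by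
    obtain ⟨d, -, rfl⟩ := List.mem_map.1 h
    exact dist_nonneg

theorem dist_le_sum_dist_fin {n : ℕ} (p : Fin (n + 1) → X) :
    dist (p 0) (p (Fin.last n)) ≤ ∑ i : Fin n, dist (p i.castSucc) (p i.succ) := by
  induction n with
  | zero => simp
  | succ n ih =>
    rw [Fin.sum_univ_castSucc]
    exact (dist_triangle _ (p (Fin.last n).castSucc) _).trans
      (add_le_add (ih (p ∘ Fin.castSucc)) le_rfl)

end MetricLength

section BasicGeodesicGraph

variable {X : Type*} [MetricSpace X]

theorem IsNonBasicChain.exists_between {x x' : X} (h : IsNonBasicChain x x') :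
    ∃ z, z ≠ x ∧ z ≠ x' ∧ dist x z + dist z x' = dist x x' := by
  obtain ⟨k, p, hk, hinj, rfl, rfl, hsum⟩ := h
  refine ⟨p 1, hinj.ne (by simp), hinj.ne ?_, le_antisymm ?_ (dist_triangle _ _ _)⟩
  · rw [Ne, Fin.ext_iff, Fin.val_one, Fin.val_last]
    omega
  have := dist_le_sum_dist_fin (p ∘ Fin.succ)
  simp only [Function.comp_apply, Fin.succ_last, Fin.succ_castSucc] at this
  rw [hsum, Fin.sum_univ_succ]
  exact add_le_add le_rfl this

theorem IsNonBasicEdge.exists_between {x x' : X} (h : IsNonBasicEdge x x') :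
    ∃ z, z ≠ x ∧ z ≠ x' ∧ dist x z + dist z x' = dist x x' := by
  rcases h with h | h
  · exact h.exists_between
  · obtain ⟨z, hz, hz', hsum⟩ := h.exists_between
    exact ⟨z, hz', hz, by linarith [dist_comm x z, dist_comm z x', dist_comm x x']⟩

theorem exists_basicGeodesicGraph_walk_metricLength_le [Finite X] (x y : X) :
    ∃ p : (basicGeodesicGraph X).Walk x y, metricLength p ≤ dist x y := by
  suffices ∀ q : X × X,
      ∃ p : (basicGeodesicGraph X).Walk q.1 q.2, metricLength p ≤ dist q.1 q.2 from this (x, y)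
  intro q
  induction q using (Finite.wellFounded_of_trans_of_irrefl
    (InvImage (· < ·) fun q : X × X => dist q.1 q.2)).induction with
  | _ q ih =>
    obtain ⟨x, y⟩ := q
    dsimp only at ih ⊢
    by_cases hxy : x = y
    · subst hxy
      exact ⟨.nil, by simp⟩
    by_cases hnb : IsNonBasicEdge x y
    · obtain ⟨z, hzx, hzy, hz⟩ := hnb.exists_between
      have := dist_pos.2 hzx.symm
      have := dist_pos.2 hzy
      obtain ⟨p₁, hp₁⟩ := ih (x, z) (show dist x z < dist x y by linarith)
      obtain ⟨p₂, hp₂⟩ := ih (z, y) (show dist z y < dist x y by linarith)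
      exact ⟨p₁.append p₂, by rw [metricLength_append]; linarith⟩
    · exact ⟨.cons (show (basicGeodesicGraph X).Adj x y from ⟨hxy, hnb⟩) .nil, by
        rw [metricLength_cons, metricLength_nil, add_zero]⟩

end BasicGeodesicGraph

section PathMetric

variable {X : Type*} [MetricSpace X] {G : SimpleGraph X}

theorem metricLength_eq_dist_of_isAcyclic (hG : G.IsAcyclic)
    (hgeod : ∀ x y : X, ∃ p : G.Walk x y, metricLength p ≤ dist x y)
    {x y : X} {p : G.Walk x y} (hp : p.IsPath) : metricLength p = dist x y := by
  classical
  obtain ⟨q, hq⟩ := hgeod x y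
  have := hG.subsingleton_path x y
  have hpq : p = q.bypass :=
    congrArg Subtype.val (Subsingleton.elim ⟨p, hp⟩ ⟨q.bypass, q.bypass_isPath⟩)
  exact le_antisymm (hpq ▸ (metricLength_bypass_le q).trans hq) (dist_le_metricLength p)

theorem dist_eq_add_of_mem_support
    (hpath : ∀ {x y : X} (p : G.Walk x y), p.IsPath → metricLength p = dist x y)
    {x y m : X} {p : G.Walk x y} (hp : p.IsPath) (hm : m ∈ p.support) :
    dist x y = dist x m + dist m y := by
  classical
  rw [← hpath _ (hp.takeUntil hm), ← hpath _ (hp.dropUntil hm), ← metricLength_append,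
    p.take_spec hm, hpath _ hp]

theorem dist_eq_add_of_forall_mem_support_dist_le
    (hpath : ∀ {x y : X} (p : G.Walk x y), p.IsPath → metricLength p = dist x y)
    (hconn : G.Connected) {x y z m : X} {q : G.Walk y z} (hq : q.IsPath) (hm : m ∈ q.support)
    (hmin : ∀ w ∈ q.support, dist x m ≤ dist x w) :
    dist x z = dist x m + dist m z := by
  classical
  obtain ⟨r, hr⟩ : ∃ r : G.Walk x m, r.IsPath := ⟨_, (hconn.preconnected x m).some.bypass_isPath⟩
  have hs := hq.dropUntil hm
  have hrs : (r.append (q.dropUntil m hm)).IsPath := by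
    refine hr.append hs fun w hwr hws => ?_
    -- a common point `w ≠ m` would lie on the path from `x` to `m`, hence be closer to `x`
    by_contra hwm
    have hxw := hmin w (q.support_dropUntil_subset_support hm hws)
    have hsplit := dist_eq_add_of_mem_support hpath hr hwr
    have hwm := dist_pos.2 hwm
    linarith
  rw [← hpath _ hrs, metricLength_append, hpath _ hr, hpath _ hs]

theorem fourthPointCondition_of_isPath_metricLength_eq (hconn : G.Connected)
    (hpath : ∀ {x y : X} (p : G.Walk x y), p.IsPath → metricLength p = dist x y) :
    FourthPointCondition X := by
  classical
  intro x y z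
  obtain ⟨q, hq⟩ : ∃ q : G.Walk y z, q.IsPath := ⟨_, (hconn.preconnected y z).some.bypass_isPath⟩
  obtain ⟨m, hm, hmin⟩ := q.support.toFinset.exists_min_image (dist x) ⟨y, by simp⟩
  simp only [List.mem_toFinset] at hm hmin
  have hxz := dist_eq_add_of_forall_mem_support_dist_le hpath hconn hq hm hmin
  have hxy := dist_eq_add_of_forall_mem_support_dist_le hpath hconn hq.reverse
    (by simpa using hm) (by simpa using hmin)
  have hyz := dist_eq_add_of_mem_support hpath hq hm
  refine ⟨m, ?_⟩
  rw [dist_comm z x, hxy, hxz, hyz, dist_comm y m, dist_comm z m]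
  ring

end PathMetric

theorem fourthPointCondition_of_basicGeodesicGraph_isTree_general
    {X : Type*} [MetricSpace X] [Fintype X]
    (h : (basicGeodesicGraph X).IsTree) :
    FourthPointCondition X :=
  fourthPointCondition_of_isPath_metricLength_eq h.connected fun _ hp =>
    metricLength_eq_dist_of_isAcyclic h.isAcyclic
      exists_basicGeodesicGraph_walk_metricLength_le hp

/-- If the basic geodesic graph of a finite metric space is a tree, then the metric
space satisfies the fourth-point condition. -/
theorem fourthPointCondition_of_basicGeodesicGraph_isTree
    {X : Type*} [MetricSpace X] [Fintype X] [Nonempty X]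
    (h : (basicGeodesicGraph X).IsTree) :
    FourthPointCondition X :=
  fourthPointCondition_of_basicGeodesicGraph_isTree_general h
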